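/- arXiv:2405.18323 — 6 statements merged into one kernel-verified Lean document; each statement's English description precedes it below -/
import Mathlib

section
/- Let V = diag(Cⱼ) + b·μμᵀ be a block matrix, where each block Cⱼ = diag(μⱼₖ) + c·μⱼμⱼᵀ with μⱼ the vector of positive entries μⱼₖ, b ≥ 0, c ≥ 0, and μ the concatenation of the μⱼ. Set uⱼ = sⱼ/(1+c·sⱼ) with sⱼ = Σₖ μⱼₖ and aⱼ = (1/(1+c·sⱼ)) 1_{nⱼ}. Then V⁻¹ = diag(Cⱼ⁻¹) − (b/(1 + b·Σⱼ uⱼ)) a aᵀ, where a is the concatenation of the aⱼ. -/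
/-!
Each diagonal block `Cⱼ = diag(μⱼ) + c μⱼ μⱼᵀ` is a symmetric rank-one update of a diagonal
matrix, and `V` is a symmetric rank-one update of `diag(Cⱼ)`, so the Sherman–Morrison formula
applies twice. The first application gives `Cⱼ⁻¹ = diag(μⱼ)⁻¹ - c / (1 + c sⱼ) 𝟙𝟙ᵀ`, whence
`Cⱼ⁻¹ μⱼ = aⱼ` and `μᵀ diag(Cⱼ⁻¹) μ = ∑ⱼ uⱼ`; the second then yields the stated inverse.
-/

open Matrix Finset

namespace Matrix

theorem blockDiagonal'_mulVec_apply {ι α : Type*} [Fintype ι] [DecidableEq ι]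
    [NonUnitalNonAssocSemiring α] {m κ : ι → Type*} [∀ j, Fintype (κ j)]
    (M : ∀ j, Matrix (m j) (κ j) α) (v : (Σ j, κ j) → α) (j : ι) (k : m j) :
    (blockDiagonal' M *ᵥ v) ⟨j, k⟩ = (M j *ᵥ fun k' => v ⟨j, k'⟩) k := by
  simp only [mulVec, dotProduct]
  rw [← univ_sigma_univ, sum_sigma, sum_eq_single j]
  · simp [blockDiagonal'_apply_eq]
  · intro j' _ hj
    simp [blockDiagonal'_apply_ne _ _ _ hj.symm]
  · simp

variable {ι K : Type*} [Fintype ι] [DecidableEq ι] [Field K]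

/-- The Sherman–Morrison formula. -/
theorem add_smul_vecMulVec_self_mul_eq_one {A B : Matrix ι ι K} (hAB : A * B = 1)
    (hB : B.IsSymm) (b : K) (v : ι → K) (h : 1 + b * (v ⬝ᵥ B *ᵥ v) ≠ 0) :
    (A + b • vecMulVec v v) *
      (B - (b / (1 + b * (v ⬝ᵥ B *ᵥ v))) • vecMulVec (B *ᵥ v) (B *ᵥ v)) = 1 := by
  set x := B *ᵥ v
  set k := b / (1 + b * (v ⬝ᵥ x))
  have hk : k * (1 + b * (v ⬝ᵥ x)) = b := div_mul_cancel₀ b h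
  have hAx : A * vecMulVec x x = vecMulVec v x := by
    rw [mul_vecMulVec, mulVec_mulVec, hAB, one_mulVec]
  have hvB : vecMulVec v v * B = vecMulVec v x := by
    rw [vecMulVec_mul, ← mulVec_transpose, hB.eq]
  have hvx : vecMulVec v v * vecMulVec x x = (v ⬝ᵥ x) • vecMulVec v x := by
    rw [vecMulVec_mul_vecMulVec, vecMulVec_smul]
  rw [add_mul, mul_sub, mul_sub, hAB, mul_smul_comm, hAx, smul_mul_assoc, hvB,
    smul_mul_assoc, mul_smul_comm, hvx, smul_smul]
  linear_combination (norm := module) -(hk • vecMulVec v x)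

theorem diagonal_inv_mulVec_self {d : ι → K} (hd : ∀ i, d i ≠ 0) :
    diagonal (fun i => (d i)⁻¹) *ᵥ d = 1 := by
  ext i
  rw [mulVec_diagonal, inv_mul_cancel₀ (hd i), Pi.one_apply]

theorem diagonal_add_smul_vecMulVec_self_mul_eq_one {d : ι → K} (hd : ∀ i, d i ≠ 0) (c : K)
    (h : 1 + c * ∑ i, d i ≠ 0) :
    (diagonal d + c • vecMulVec d d) *
      (diagonal (fun i => (d i)⁻¹) - (c / (1 + c * ∑ i, d i)) • vecMulVec 1 1) = 1 := by
  have hdd : diagonal d * diagonal (fun i => (d i)⁻¹) = 1 := by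
    rw [diagonal_mul_diagonal, ← diagonal_one]
    congr! with i
    exact mul_inv_cancel₀ (hd i)
  have := add_smul_vecMulVec_self_mul_eq_one hdd (isSymm_diagonal _) c d
  rw [diagonal_inv_mulVec_self hd, dotProduct_one] at this
  exact this h

theorem diagonal_inv_sub_smul_vecMulVec_one_mulVec_self {d : ι → K} (hd : ∀ i, d i ≠ 0)
    (c : K) (h : 1 + c * ∑ i, d i ≠ 0) :
    (diagonal (fun i => (d i)⁻¹) - (c / (1 + c * ∑ i, d i)) • vecMulVec 1 1) *ᵥ d =
      (1 + c * ∑ i, d i)⁻¹ • 1 := by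
  have hk : 1 - c / (1 + c * ∑ i, d i) * ∑ i, d i = (1 + c * ∑ i, d i)⁻¹ := by
    field_simp
    ring
  rw [sub_mulVec, smul_mulVec, vecMulVec_mulVec, one_dotProduct, op_smul_eq_smul,
    diagonal_inv_mulVec_self hd, smul_smul]
  linear_combination (norm := module) hk • (1 : ι → K)

theorem blockDiagonal'_add_smul_vecMulVec_mul_eq_one {κ : ι → Type*} [∀ j, Fintype (κ j)]
    [∀ j, DecidableEq (κ j)] {μ : (Σ j, κ j) → K} (hμ : ∀ i, μ i ≠ 0) (b c : K)
    (hs : ∀ j, 1 + c * ∑ k, μ ⟨j, k⟩ ≠ 0)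
    (hu : 1 + b * ∑ j, (∑ k, μ ⟨j, k⟩) / (1 + c * ∑ k, μ ⟨j, k⟩) ≠ 0) :
    (blockDiagonal' (fun j => diagonal (fun k => μ ⟨j, k⟩)
        + c • vecMulVec (fun k => μ ⟨j, k⟩) (fun k => μ ⟨j, k⟩)) + b • vecMulVec μ μ) *
      (blockDiagonal' (fun j => diagonal (fun k => (μ ⟨j, k⟩)⁻¹)
          - (c / (1 + c * ∑ k, μ ⟨j, k⟩)) • vecMulVec 1 1)
        - (b / (1 + b * ∑ j, (∑ k, μ ⟨j, k⟩) / (1 + c * ∑ k, μ ⟨j, k⟩))) •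
          vecMulVec (fun i => (1 + c * ∑ k, μ ⟨i.1, k⟩)⁻¹) (fun i => (1 + c * ∑ k, μ ⟨i.1, k⟩)⁻¹))
      = 1 := by
  set B := blockDiagonal' (fun j => diagonal (fun k => (μ ⟨j, k⟩)⁻¹)
    - (c / (1 + c * ∑ k, μ ⟨j, k⟩)) • vecMulVec 1 1)
  have hAB : blockDiagonal' (fun j => diagonal (fun k => μ ⟨j, k⟩)
      + c • vecMulVec (fun k => μ ⟨j, k⟩) (fun k => μ ⟨j, k⟩)) * B = 1 := by
    rw [← blockDiagonal'_mul, ← blockDiagonal'_one]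
    congr! with j
    exact diagonal_add_smul_vecMulVec_self_mul_eq_one (fun k => hμ _) c (hs j)
  have hB : B.IsSymm := by
    rw [IsSymm, blockDiagonal'_transpose]
    congr 1
    funext j
    exact (isSymm_diagonal _).sub (IsSymm.smul (transpose_vecMulVec _ _) _)
  have hBμ : B *ᵥ μ = fun i => (1 + c * ∑ k, μ ⟨i.1, k⟩)⁻¹ := by
    ext ⟨j, k⟩
    rw [blockDiagonal'_mulVec_apply,
      diagonal_inv_sub_smul_vecMulVec_one_mulVec_self (fun k => hμ _) c (hs j)]
    simp
  have hμBμ : μ ⬝ᵥ B *ᵥ μ = ∑ j, (∑ k, μ ⟨j, k⟩) / (1 + c * ∑ k, μ ⟨j, k⟩) := by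
    rw [hBμ, dotProduct, ← univ_sigma_univ, sum_sigma]
    simp [div_eq_mul_inv, sum_mul]
  have := add_smul_vecMulVec_self_mul_eq_one hAB hB b μ
  rw [hμBμ, hBμ] at this
  exact this hu

end Matrix

/-- Inverse of the block matrix `V = diag(Cⱼ) + b μ μᵀ`, where
`Cⱼ = diag(μⱼₖ) + c μⱼ μⱼᵀ`. -/
theorem inv_block_compound_symmetry {J : ℕ} (n : Fin J → ℕ)
    (μ : (Σ j : Fin J, Fin (n j)) → ℝ) (b c : ℝ)
    (hμ : ∀ i, 0 < μ i) (hb : 0 ≤ b) (hc : 0 ≤ c) :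
    letI s : Fin J → ℝ := fun j => ∑ k, μ ⟨j, k⟩
    letI u : Fin J → ℝ := fun j => s j / (1 + c * s j)
    letI a : (Σ j : Fin J, Fin (n j)) → ℝ := fun i => (1 + c * s i.1)⁻¹
    letI V : Matrix (Σ j : Fin J, Fin (n j)) (Σ j : Fin J, Fin (n j)) ℝ :=
      Matrix.of fun i i' =>
        (if i = i' then μ i else 0) + (if i.1 = i'.1 then c * μ i * μ i' else 0)
          + b * μ i * μ i'
    V⁻¹ = Matrix.of fun i i' =>
        ((if i = i' then (μ i)⁻¹ else 0) - (if i.1 = i'.1 then c / (1 + c * s i.1) else 0))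
          - (b / (1 + b * ∑ j, u j)) * a i * a i' := by
  beta_reduce
  have hs_nonneg (j : Fin J) : 0 ≤ ∑ k, μ ⟨j, k⟩ := sum_nonneg fun k _ => (hμ _).le
  have hs (j : Fin J) : 0 < 1 + c * ∑ k, μ ⟨j, k⟩ :=
    add_pos_of_pos_of_nonneg one_pos (mul_nonneg hc (hs_nonneg j))
  have hu : 0 < 1 + b * ∑ j, (∑ k, μ ⟨j, k⟩) / (1 + c * ∑ k, μ ⟨j, k⟩) :=
    add_pos_of_pos_of_nonneg one_pos
      (mul_nonneg hb (sum_nonneg fun j _ => div_nonneg (hs_nonneg j) (hs j).le))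
  have hV : (of fun i i' => ((if i = i' then μ i else 0) + if i.1 = i'.1 then c * μ i * μ i' else 0)
      + b * μ i * μ i') = blockDiagonal' (fun j => diagonal (fun k => μ ⟨j, k⟩)
        + c • vecMulVec (fun k => μ ⟨j, k⟩) (fun k => μ ⟨j, k⟩)) + b • vecMulVec μ μ := by
    ext ⟨j, k⟩ ⟨j', k'⟩
    obtain rfl | hj := eq_or_ne j j'
    · simp [blockDiagonal'_apply_eq, diagonal_apply, vecMulVec_apply, mul_assoc]
    · simp [blockDiagonal'_apply_ne _ _ _ hj, hj, vecMulVec_apply, mul_assoc]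
  rw [hV, inv_eq_right_inv (blockDiagonal'_add_smul_vecMulVec_mul_eq_one (fun i => (hμ i).ne') b c
    (fun j => (hs j).ne') hu.ne')]
  ext ⟨j, k⟩ ⟨j', k'⟩
  obtain rfl | hj := eq_or_ne j j'
  · simp [blockDiagonal'_apply_eq, diagonal_apply, vecMulVec_apply, mul_assoc]
  · simp [blockDiagonal'_apply_ne _ _ _ hj, hj, vecMulVec_apply, mul_assoc]
end

section
/- With V and notation as above, and D the n×p matrix with rows μⱼₖ fⱼᵀ (fⱼ ∈ ℝᵖ the regression vector at time j), the quasi-information matrix satisfies Dᵀ V⁻¹ D = Fᵀ U F − (b/(1 + b Σⱼ uⱼ)) Fᵀ u uᵀ F, where F is the J×p matrix with rows fⱼᵀ, U = diag(u₁,…,u_J), and u = (u₁,…,u_J)ᵀ. -/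
/-!
Write `Δ = diag μ` and let `P` be the `0/1` matrix of `Sigma.fst`. Then `D = Δ P F` and
`V = Δ + Δ P K Pᵀ Δ`, where `K = c I + b 𝟙𝟙ᵀ` is a `J × J` compound-symmetry matrix. The
push-through identity `A (Δ + B K A)⁻¹ B = (1 + S K)⁻¹ S`, `S = A Δ⁻¹ B`, turns the inverse of
the large matrix `V` into the inverse of `1 + S K` with `S = PᵀΔP = diag s`. Finally
`1 + diag s · K = diag (1 + c s) + b s 𝟙ᵀ` is a diagonal plus rank-one matrix, inverted by
Sherman–Morrison, and `(1 + S K)⁻¹ S = U - (b / (1 + b Σ u)) u uᵀ`. All pivots `μᵢ`, `1 + c sⱼ`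
and `1 + b Σ u` are nonzero because `μ > 0` and `b, c ≥ 0`.
-/

open Matrix Finset

namespace Matrix

theorem mul_inv_add_mul_mul_mul {m n α : Type*} [Fintype m] [DecidableEq m] [Fintype n]
    [DecidableEq n] [CommRing α] {Δ : Matrix n n α} (hΔ : IsUnit Δ.det)
    (A : Matrix m n α) (K : Matrix m m α) (B : Matrix n m α)
    (h : IsUnit (1 + A * Δ⁻¹ * B * K).det) :
    A * (Δ + B * K * A)⁻¹ * B = (1 + A * Δ⁻¹ * B * K)⁻¹ * (A * Δ⁻¹ * B) := by
  set V := Δ + B * K * A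
  have hV : IsUnit V.det := by
    rw [det_add_mul _ _ hΔ, ← Matrix.mul_assoc]
    exact hΔ.mul h
  have push : A * Δ⁻¹ * V = (1 + A * Δ⁻¹ * B * K) * A := by
    rw [Matrix.mul_add, Matrix.add_mul, Matrix.one_mul, nonsing_inv_mul_cancel_right _ _ hΔ]
    simp only [Matrix.mul_assoc]
  calc A * V⁻¹ * B
      = (1 + A * Δ⁻¹ * B * K)⁻¹ * ((1 + A * Δ⁻¹ * B * K) * A) * V⁻¹ * B := by
        rw [← Matrix.mul_assoc _ _ A, nonsing_inv_mul _ h, Matrix.one_mul]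
    _ = (1 + A * Δ⁻¹ * B * K)⁻¹ * (A * Δ⁻¹ * B) := by
        rw [← push]
        simp only [Matrix.mul_assoc, mul_nonsing_inv_cancel_left _ _ hV]

theorem diagonal_add_vecMulVec_mul_eq_one {m 𝕜 : Type*} [Fintype m] [DecidableEq m] [Field 𝕜]
    {d : m → 𝕜} (hd : ∀ i, d i ≠ 0) (x y : m → 𝕜)
    (h : 1 + y ⬝ᵥ (x / d) ≠ 0) :
    (diagonal d + vecMulVec x y) *
      (diagonal d⁻¹ - (1 + y ⬝ᵥ (x / d))⁻¹ • vecMulVec (x / d) (y / d)) = 1 := by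
  have eigen : (diagonal d + vecMulVec x y) *ᵥ (x / d) = (1 + y ⬝ᵥ (x / d)) • x := by
    ext i
    simp [add_mulVec, mulVec_diagonal, vecMulVec_mulVec, add_mul, mul_div_cancel₀ _ (hd i)]
  rw [Matrix.mul_sub, Matrix.mul_smul, mul_vecMulVec, eigen, smul_vecMulVec, inv_smul_smul₀ h]
  ext i k
  simp [Matrix.add_mul, vecMulVec_apply, div_eq_mul_inv, hd, mul_assoc]

theorem const_dotProduct_div_one_add_mul {m 𝕜 : Type*} [Fintype m] [Field 𝕜] (s : m → 𝕜)
    (c b : 𝕜) :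
    (fun _ => b) ⬝ᵥ (s / fun j => 1 + c * s j) = b * ∑ j, s j / (1 + c * s j) := by
  simp [dotProduct, Finset.mul_sum]

section CompoundSymmetry
variable {m : Type*} [DecidableEq m]

def compoundSymmetry {R : Type*} [Semiring R] (c b : R) : Matrix m m R :=
  c • 1 + b • vecMulVec 1 1

theorem compoundSymmetry_apply {R : Type*} [Semiring R] (c b : R) (i j : m) :
    compoundSymmetry c b i j = (if i = j then c else 0) + b := by
  by_cases h : i = j <;> simp [compoundSymmetry, h]

variable [Fintype m] {𝕜 : Type*} [Field 𝕜]

theorem one_add_diagonal_mul_compoundSymmetry (s : m → 𝕜) (c b : 𝕜) :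
    1 + diagonal s * compoundSymmetry c b =
      diagonal (fun j => 1 + c * s j) + vecMulVec s (fun _ => b) := by
  ext i k
  rcases eq_or_ne i k with rfl | h
  · simp [compoundSymmetry_apply, vecMulVec_apply]
    ring
  · simp [h, compoundSymmetry_apply, vecMulVec_apply]

variable {s : m → 𝕜} {c b : 𝕜}

theorem isUnit_det_one_add_diagonal_mul_compoundSymmetry
    (hcs : ∀ j, 1 + c * s j ≠ 0) (hb : 1 + b * ∑ j, s j / (1 + c * s j) ≠ 0) :
    IsUnit (1 + diagonal s * compoundSymmetry c b).det := by
  rw [one_add_diagonal_mul_compoundSymmetry]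
  refine isUnit_det_of_right_inverse (diagonal_add_vecMulVec_mul_eq_one hcs _ _ ?_)
  rwa [const_dotProduct_div_one_add_mul]

theorem inv_one_add_diagonal_mul_compoundSymmetry_mul_diagonal
    (hcs : ∀ j, 1 + c * s j ≠ 0) (hb : 1 + b * ∑ j, s j / (1 + c * s j) ≠ 0) :
    (1 + diagonal s * compoundSymmetry c b)⁻¹ * diagonal s =
      diagonal (fun j => s j / (1 + c * s j)) - (b / (1 + b * ∑ j, s j / (1 + c * s j))) •
        vecMulVec (fun j => s j / (1 + c * s j)) (fun j => s j / (1 + c * s j)) := by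
  rw [one_add_diagonal_mul_compoundSymmetry, inv_eq_right_inv (diagonal_add_vecMulVec_mul_eq_one
    hcs _ _ (const_dotProduct_div_one_add_mul s c b ▸ hb)), const_dotProduct_div_one_add_mul]
  ext i k
  rcases eq_or_ne i k with rfl | h <;> simp [*, vecMulVec_apply] <;> ring

end CompoundSymmetry

section BlockIndicator
variable {κ : Type*} (ι : κ → Type*) [Fintype κ] [DecidableEq κ]

def blockIndicator (R : Type*) [Zero R] [One R] : Matrix (Σ j, ι j) κ R :=
  of fun i j => if i.1 = j then 1 else 0

theorem blockIndicator_mul {R : Type*} [Semiring R] {p : Type*} (F : Matrix κ p R) :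
    blockIndicator ι R * F = F.submatrix Sigma.fst id := by
  ext i l
  simp [blockIndicator, mul_apply]

theorem blockIndicator_mul_mul_transpose {R : Type*} [Semiring R] (K : Matrix κ κ R) :
    blockIndicator ι R * K * (blockIndicator ι R)ᵀ = K.submatrix Sigma.fst Sigma.fst := by
  ext i i'
  simp [blockIndicator, mul_apply]

variable [∀ j, Fintype (ι j)] [∀ j, DecidableEq (ι j)]

theorem diagonal_mul_blockIndicator_mul_of {R : Type*} [Semiring R] (μ : (Σ j, ι j) → R)
    {p : Type*} (f : κ → p → R) :
    diagonal μ * blockIndicator ι R * of f = of fun i l => μ i * f i.1 l := by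
  rw [Matrix.mul_assoc, blockIndicator_mul]
  ext i l
  simp

theorem transpose_blockIndicator_mul_diagonal_mul_blockIndicator {R : Type*} [Semiring R]
    (μ : (Σ j, ι j) → R) :
    (blockIndicator ι R)ᵀ * diagonal μ * blockIndicator ι R =
      diagonal fun j => ∑ k, μ ⟨j, k⟩ := by
  ext j j'
  rcases eq_or_ne j j' with rfl | h <;>
    simp [blockIndicator, mul_apply, diagonal_apply, Fintype.sum_sigma, *, Ne.symm]

variable {R : Type*} [CommRing R]

theorem diagonal_add_diagonal_mul_blockIndicator_mul_compoundSymmetry (μ : (Σ j, ι j) → R)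
    (c b : R) :
    diagonal μ + diagonal μ * blockIndicator ι R * (compoundSymmetry c b : Matrix κ κ R) *
        (blockIndicator ι R)ᵀ * diagonal μ =
      of fun i i' => (if i = i' then μ i else 0) + (if i.1 = i'.1 then c * μ i * μ i' else 0) +
        b * μ i * μ i' := by
  set K : Matrix κ κ R := compoundSymmetry c b
  rw [show diagonal μ * blockIndicator ι R * K * (blockIndicator ι R)ᵀ =
      diagonal μ * (blockIndicator ι R * K * (blockIndicator ι R)ᵀ) by
    simp only [Matrix.mul_assoc], blockIndicator_mul_mul_transpose]
  ext i i'
  rcases eq_or_ne i i' with rfl | h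
  · simp [K, compoundSymmetry_apply]
    ring
  · simp [K, compoundSymmetry_apply, h]
    split_ifs <;> ring

theorem transpose_mul_inv_mul_blockIndicator {μ : (Σ j, ι j) → R}
    (hμ : IsUnit μ) {p : Type*} (K : Matrix κ κ R) (F : Matrix κ p R)
    (hK : IsUnit (1 + diagonal (fun j => ∑ k, μ ⟨j, k⟩) * K).det) :
    (diagonal μ * blockIndicator ι R * F)ᵀ *
        (diagonal μ + diagonal μ * blockIndicator ι R * K * (blockIndicator ι R)ᵀ * diagonal μ)⁻¹ *
        (diagonal μ * blockIndicator ι R * F) =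
      Fᵀ * ((1 + diagonal (fun j => ∑ k, μ ⟨j, k⟩) * K)⁻¹ *
        diagonal (fun j => ∑ k, μ ⟨j, k⟩)) * F := by
  set Δ := diagonal μ
  set P := blockIndicator ι R
  have hΔ : IsUnit Δ.det := (isUnit_iff_isUnit_det _).mp (isUnit_diagonal.mpr hμ)
  have hS : Pᵀ * Δ * Δ⁻¹ * (Δ * P) = diagonal fun j => ∑ k, μ ⟨j, k⟩ := by
    rw [mul_nonsing_inv_cancel_right _ _ hΔ, ← Matrix.mul_assoc,
      transpose_blockIndicator_mul_diagonal_mul_blockIndicator]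
  have reassoc : Δ + Δ * P * K * Pᵀ * Δ = Δ + Δ * P * K * (Pᵀ * Δ) := by
    simp only [Matrix.mul_assoc]
  rw [reassoc, transpose_mul, transpose_mul, show Δᵀ = Δ from diagonal_transpose μ]
  calc Fᵀ * (Pᵀ * Δ) * (Δ + Δ * P * K * (Pᵀ * Δ))⁻¹ * (Δ * P * F)
      = Fᵀ * ((Pᵀ * Δ) * (Δ + Δ * P * K * (Pᵀ * Δ))⁻¹ * (Δ * P)) * F := by
        simp only [Matrix.mul_assoc]
    _ = _ := by
        rw [mul_inv_add_mul_mul_mul hΔ _ _ _ (hS ▸ hK), hS]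

end BlockIndicator

end Matrix

/-- Representation of the quasi-information matrix:
`Dᵀ V⁻¹ D = Fᵀ U F − (b/(1 + b Σⱼ uⱼ)) Fᵀ u uᵀ F`. -/
theorem quasi_information_representation {J p : ℕ} (n : Fin J → ℕ)
    (μ : (Σ j : Fin J, Fin (n j)) → ℝ) (f : Fin J → Fin p → ℝ) (b c : ℝ)
    (hμ : ∀ i, 0 < μ i) (hb : 0 ≤ b) (hc : 0 ≤ c) :
    letI s : Fin J → ℝ := fun j => ∑ k, μ ⟨j, k⟩
    letI u : Fin J → ℝ := fun j => s j / (1 + c * s j)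
    letI V : Matrix (Σ j : Fin J, Fin (n j)) (Σ j : Fin J, Fin (n j)) ℝ :=
      Matrix.of fun i i' =>
        (if i = i' then μ i else 0) + (if i.1 = i'.1 then c * μ i * μ i' else 0)
          + b * μ i * μ i'
    letI D : Matrix (Σ j : Fin J, Fin (n j)) (Fin p) ℝ :=
      Matrix.of fun i l => μ i * f i.1 l
    letI F : Matrix (Fin J) (Fin p) ℝ := Matrix.of fun j l => f j l
    Dᵀ * V⁻¹ * D =
      Fᵀ * Matrix.diagonal u * F
        - (b / (1 + b * ∑ j, u j)) • (Fᵀ * vecMulVec u u * F) := by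
  set s : Fin J → ℝ := fun j => ∑ k, μ ⟨j, k⟩
  set u : Fin J → ℝ := fun j => s j / (1 + c * s j)
  have hs : ∀ j, 0 ≤ s j := fun j => sum_nonneg fun k _ => (hμ _).le
  have hw : ∀ j, 0 < 1 + c * s j := fun j => by linarith [mul_nonneg hc (hs j)]
  have hbu : 0 < 1 + b * ∑ j, u j := by
    have hu : 0 ≤ ∑ j, u j := sum_nonneg fun j _ => div_nonneg (hs j) (hw j).le
    linarith [mul_nonneg hb hu]
  have hcs : ∀ j, 1 + c * s j ≠ 0 := fun j => (hw j).ne'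
  rw [← diagonal_add_diagonal_mul_blockIndicator_mul_compoundSymmetry,
    ← diagonal_mul_blockIndicator_mul_of]
  refine (transpose_mul_inv_mul_blockIndicator _ (Pi.isUnit_iff.mpr fun i => (hμ i).ne'.isUnit)
    _ _ (isUnit_det_one_add_diagonal_mul_compoundSymmetry hcs hbu.ne')).trans ?_
  rw [inv_one_add_diagonal_mul_compoundSymmetry_mul_diagonal hcs hbu.ne', Matrix.mul_sub,
    Matrix.sub_mul, Matrix.mul_smul, Matrix.smul_mul]
end

section
/- Under the assumptions F c = 1_J and M(ξ) = FᵀU F invertible, the D-criterion satisfies log det(M_Q) = log det(M) − log(1 + b·1_Jᵀ U 1_J), where M_Q = (M⁻¹ + b c cᵀ)⁻¹ and b ≥ 0. -/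
/-! The matrix determinant lemma gives `det (M⁻¹ + b c cᵀ) = (det M)⁻¹ (1 + b cᵀ M c)`, and
`F c = 1` turns the quadratic form `cᵀ Fᵀ U F c` into `1ᵀ U 1 ≥ 0`, so the logarithms split. -/

open Matrix

namespace Matrix

variable {m n R : Type*} [Fintype m] [Fintype n]

theorem dotProduct_transpose_mul_mul_mulVec [CommSemiring R] (F : Matrix m n R)
    (D : Matrix m m R) (c : n → R) :
    c ⬝ᵥ ((Fᵀ * D * F) *ᵥ c) = (F *ᵥ c) ⬝ᵥ (D *ᵥ (F *ᵥ c)) := by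
  rw [Matrix.mul_assoc, ← mulVec_mulVec, ← mulVec_mulVec, dotProduct_mulVec, vecMul_transpose]

theorem dotProduct_diagonal_mulVec_self_nonneg [DecidableEq m] [CommRing R] [LinearOrder R]
    [IsStrictOrderedRing R] {u : m → R} (hu : 0 ≤ u) (v : m → R) :
    0 ≤ v ⬝ᵥ (diagonal u *ᵥ v) := by
  simp only [dotProduct, mulVec_diagonal]
  exact Finset.sum_nonneg fun j _ => by
    rw [mul_left_comm]; exact mul_nonneg (hu j) (mul_self_nonneg (v j))

variable [DecidableEq n]

theorem det_add_vecMulVec [CommRing R] {A : Matrix n n R} (hA : IsUnit A.det) (u v : n → R) :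
    (A + vecMulVec u v).det = A.det * (1 + v ⬝ᵥ (A⁻¹ *ᵥ u)) := by
  rw [vecMulVec_eq Unit, det_add_replicateCol_mul_replicateRow hA, det_unique (n := Unit),
    Matrix.mul_assoc, ← replicateCol_mulVec, add_apply, one_apply_eq,
    replicateRow_mul_replicateCol_apply]

theorem det_inv_add_smul_vecMulVec {K : Type*} [Field K] {M : Matrix n n K} (hM : IsUnit M.det)
    (b : K) (c : n → K) :
    (M⁻¹ + b • vecMulVec c c).det = M.det⁻¹ * (1 + b * (c ⬝ᵥ (M *ᵥ c))) := by
  have hM' : IsUnit M⁻¹.det := by simpa using hM.inv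
  rw [← smul_vecMulVec, det_add_vecMulVec hM', nonsing_inv_nonsing_inv M hM, det_nonsing_inv,
    Ring.inverse_eq_inv, mulVec_smul, dotProduct_smul, smul_eq_mul]

theorem log_det_inv_inv_add_smul_vecMulVec {M : Matrix n n ℝ} (hM : IsUnit M.det) (b : ℝ)
    (c : n → ℝ) (h : 1 + b * (c ⬝ᵥ (M *ᵥ c)) ≠ 0) :
    Real.log ((M⁻¹ + b • vecMulVec c c)⁻¹).det
      = Real.log M.det - Real.log (1 + b * (c ⬝ᵥ (M *ᵥ c))) := by
  rw [det_nonsing_inv, Ring.inverse_eq_inv, det_inv_add_smul_vecMulVec hM, Real.log_inv,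
    Real.log_mul (inv_ne_zero hM.ne_zero) h, Real.log_inv]
  ring

end Matrix

/-- Under `F c = 1_J` and `M = FᵀUF` invertible, the `D`-criterion satisfies
`log det M_Q = log det M − log(1 + b 1ᵀ U 1)`, where `M_Q = (M⁻¹ + b c cᵀ)⁻¹`. -/
theorem d_criterion_intercept {J p : ℕ} (F : Matrix (Fin J) (Fin p) ℝ)
    (u : Fin J → ℝ) (c : Fin p → ℝ) (b : ℝ)
    (hu : ∀ j, 0 < u j) (hb : 0 ≤ b)
    (hFc : F *ᵥ c = fun _ => (1 : ℝ))
    (hM : IsUnit (Fᵀ * Matrix.diagonal u * F).det) :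
    letI M : Matrix (Fin p) (Fin p) ℝ := Fᵀ * Matrix.diagonal u * F
    letI one : Fin J → ℝ := fun _ => (1 : ℝ)
    Real.log ((M⁻¹ + b • vecMulVec c c)⁻¹).det
      = Real.log M.det - Real.log (1 + b * (one ⬝ᵥ (Matrix.diagonal u *ᵥ one))) := by
  have hquad : c ⬝ᵥ ((Fᵀ * diagonal u * F) *ᵥ c)
      = (fun _ => (1 : ℝ)) ⬝ᵥ (diagonal u *ᵥ fun _ => (1 : ℝ)) := by
    rw [dotProduct_transpose_mul_mul_mulVec, hFc]
  have hpos : 0 < 1 + b * c ⬝ᵥ ((Fᵀ * diagonal u * F) *ᵥ c) :=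
    add_pos_of_pos_of_nonneg one_pos <| mul_nonneg hb <| hquad ▸
      dotProduct_diagonal_mulVec_self_nonneg (fun j => (hu j).le) _
  rw [← hquad]
  exact log_det_inv_inv_add_smul_vecMulVec hM b c hpos.ne'
end

section
/- The map M ↦ (M⁻¹ + K)⁻¹ is concave on positive definite matrices: for positive definite A, B, a positive semidefinite K, and 0 < ε < 1, (((1−ε)A + εB)⁻¹ + K)⁻¹ ⪰ (1−ε)(A⁻¹+K)⁻¹ + ε(B⁻¹+K)⁻¹. -/
/-!
Write `K = Hᴴ H`. In Kalman-filter terms `(M⁻¹ + Hᴴ H)⁻¹` is the posterior covariance of a prior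
with covariance `M` observed through `H` with unit noise, and for every gain `V` the Joseph-form
covariance `(1 - V H) M (1 - V H)ᴴ + V Vᴴ` exceeds it by the square `(V - G) S (V - G)ᴴ`, where
`S = 1 + H M Hᴴ` and `G = M Hᴴ S⁻¹` is the Kalman gain. So `(M⁻¹ + K)⁻¹` is the Loewner minimum
over `V` of maps that are affine in `M`, and such a minimum is concave.
-/

open Matrix
open scoped MatrixOrder ComplexOrder

namespace Matrix

variable {𝕜 m n : Type*} [RCLike 𝕜]

theorem convex_setOf_posDef : Convex ℝ {M : Matrix n n 𝕜 | M.PosDef} :=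
  convex_iff_forall_pos.mpr fun _ hA _ hB _ _ ha hb _ => (hA.smul ha).add (hB.smul hb)

variable [Fintype m] [Fintype n] [DecidableEq n]

def josephForm (H : Matrix m n 𝕜) (V : Matrix n m 𝕜) (M : Matrix n n 𝕜) : Matrix n n 𝕜 :=
  (1 - V * H) * M * (1 - V * H)ᴴ + V * Vᴴ

theorem josephForm_add_smul {a b : ℝ} (hab : a + b = 1) (H : Matrix m n 𝕜) (V : Matrix n m 𝕜)
    (A B : Matrix n n 𝕜) :
    josephForm H V (a • A + b • B) = a • josephForm H V A + b • josephForm H V B := by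
  simp only [josephForm, Matrix.mul_add, Matrix.add_mul, Matrix.mul_smul, Matrix.smul_mul]
  linear_combination (norm := module) hab.symm • (V * Vᴴ : Matrix n n 𝕜)

variable [DecidableEq m]

noncomputable def kalmanGain (H : Matrix m n 𝕜) (M : Matrix n n 𝕜) : Matrix n m 𝕜 :=
  M * Hᴴ * (1 + H * M * Hᴴ)⁻¹

variable {M : Matrix n n 𝕜}

omit [DecidableEq n] in
theorem PosDef.one_add_mul_mul_conjTranspose (hM : M.PosDef) (H : Matrix m n 𝕜) :
    (1 + H * M * Hᴴ).PosDef :=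
  PosDef.one.add_posSemidef (hM.posSemidef.mul_mul_conjTranspose_same H)

theorem PosDef.inv_add_conjTranspose_mul_inv_eq_sub (hM : M.PosDef) (H : Matrix m n 𝕜) :
    (M⁻¹ + Hᴴ * H)⁻¹ = M - kalmanGain H M * H * M := by
  have hM' : M⁻¹⁻¹ = M := nonsing_inv_nonsing_inv M ((isUnit_iff_isUnit_det M).mp hM.isUnit)
  simpa [kalmanGain, hM'] using add_mul_mul_inv_eq_sub M⁻¹ Hᴴ 1 H (by simpa using hM.isUnit)
    isUnit_one (by simpa [hM'] using (hM.one_add_mul_mul_conjTranspose H).isUnit)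

theorem PosDef.josephForm_eq_add (hM : M.PosDef) (H : Matrix m n 𝕜) (V : Matrix n m 𝕜) :
    josephForm H V M = (M⁻¹ + Hᴴ * H)⁻¹
      + (V - kalmanGain H M) * (1 + H * M * Hᴴ) * (V - kalmanGain H M)ᴴ := by
  have hS := hM.one_add_mul_mul_conjTranspose H
  have hSu : IsUnit (1 + H * M * Hᴴ).det := (isUnit_iff_isUnit_det _).mp hS.isUnit
  have hGS : kalmanGain H M * (1 + H * M * Hᴴ) = M * Hᴴ := by
    rw [kalmanGain, nonsing_inv_mul_cancel_right _ _ hSu]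
  have hSG : (1 + H * M * Hᴴ) * (kalmanGain H M)ᴴ = H * M := by
    rw [kalmanGain, conjTranspose_mul, conjTranspose_mul, hS.isHermitian.inv.eq,
      hM.isHermitian.eq, conjTranspose_conjTranspose, mul_nonsing_inv_cancel_left _ _ hSu]
  have hMG : M * Hᴴ * (kalmanGain H M)ᴴ = kalmanGain H M * H * M := by
    rw [← hGS, Matrix.mul_assoc, hSG, Matrix.mul_assoc]
  have hSq : (V - kalmanGain H M) * (1 + H * M * Hᴴ) * (V - kalmanGain H M)ᴴ
      = V * (1 + H * M * Hᴴ) * Vᴴ - M * Hᴴ * Vᴴ - V * (H * M) + kalmanGain H M * H * M := by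
    rw [conjTranspose_sub, Matrix.mul_sub, Matrix.sub_mul, Matrix.sub_mul, hGS, Matrix.sub_mul,
      hMG, Matrix.mul_assoc V _ (kalmanGain H M)ᴴ, hSG]
    abel
  rw [hM.inv_add_conjTranspose_mul_inv_eq_sub, hSq, josephForm, conjTranspose_sub,
    conjTranspose_one, conjTranspose_mul]
  simp only [Matrix.sub_mul, Matrix.mul_sub, Matrix.mul_add, Matrix.add_mul, Matrix.mul_one,
    Matrix.one_mul, Matrix.mul_assoc]
  abel

theorem PosDef.inv_add_le_josephForm (hM : M.PosDef) (H : Matrix m n 𝕜) (V : Matrix n m 𝕜) :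
    (M⁻¹ + Hᴴ * H)⁻¹ ≤ josephForm H V M := by
  rw [hM.josephForm_eq_add, le_iff, add_sub_cancel_left]
  exact (hM.one_add_mul_mul_conjTranspose H).posSemidef.mul_mul_conjTranspose_same _

theorem PosDef.josephForm_kalmanGain (hM : M.PosDef) (H : Matrix m n 𝕜) :
    josephForm H (kalmanGain H M) M = (M⁻¹ + Hᴴ * H)⁻¹ := by
  rw [hM.josephForm_eq_add, sub_self, Matrix.zero_mul, Matrix.zero_mul, add_zero]

theorem PosSemidef.concaveOn_inv_add_inv {K : Matrix n n 𝕜} (hK : K.PosSemidef) :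
    ConcaveOn ℝ {M : Matrix n n 𝕜 | M.PosDef} fun M => (M⁻¹ + K)⁻¹ := by
  obtain ⟨H, rfl⟩ := CStarAlgebra.nonneg_iff_eq_star_mul_self.mp hK.nonneg
  refine ⟨convex_setOf_posDef, fun A hA B hB a b ha hb hab => ?_⟩
  have hC : (a • A + b • B).PosDef := convex_setOf_posDef hA hB ha hb hab
  set V := kalmanGain H (a • A + b • B)
  calc a • (A⁻¹ + star H * H)⁻¹ + b • (B⁻¹ + star H * H)⁻¹
      ≤ a • josephForm H V A + b • josephForm H V B :=
        add_le_add (smul_le_smul_of_nonneg_left (hA.inv_add_le_josephForm H V) ha)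
          (smul_le_smul_of_nonneg_left (hB.inv_add_le_josephForm H V) hb)
    _ = josephForm H V (a • A + b • B) := (josephForm_add_smul hab H V A B).symm
    _ = ((a • A + b • B)⁻¹ + star H * H)⁻¹ := hC.josephForm_kalmanGain H

end Matrix

/-- Loewner concavity of `M ↦ (M⁻¹ + K)⁻¹` on positive definite matrices. -/
theorem inv_add_inv_loewner_concave {p : ℕ} (A B K : Matrix (Fin p) (Fin p) ℝ)
    (hA : A.PosDef) (hB : B.PosDef) (hK : K.PosSemidef)
    (ε : ℝ) (hε0 : 0 < ε) (hε1 : ε < 1) :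
    ((((1 - ε) • A + ε • B)⁻¹ + K)⁻¹
      - ((1 - ε) • (A⁻¹ + K)⁻¹ + ε • (B⁻¹ + K)⁻¹)).PosSemidef :=
  le_iff.mp <| hK.concaveOn_inv_add_inv.2 hA hB (sub_nonneg.mpr hε1.le) hε0.le (sub_add_cancel 1 ε)
end

section
/- For J = 2, the function g(w) = (1/(μ₁w) + a)(1/(μ₂(1−w)) + a) on (0,1), with μ₁, μ₂ > 0 and a > 0, attains its unique minimum at w* = √(a₂+1)/(√(a₁+1) + √(a₂+1)), where aⱼ = aμⱼ. -/
open Set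

/-!
Write `sⱼ = √(aμⱼ + 1)`. Since `1/(μ₁w) + a = (1 + a₁w)/(μ₁w)` and `w + (1 - w) = 1`, the numerator
`(1 + a₁w)(1 + a₂(1 - w)) = (s₁²w + (1 - w))(w + s₂²(1 - w))` completes to
`(s₁w - s₂(1 - w))² + (1 + s₁s₂)² w(1 - w)`. Hence
`μ₁μ₂ g(w) = (s₁w - s₂(1 - w))² / (w(1 - w)) + (1 + s₁s₂)²`, which is minimal exactly where the
square vanishes, i.e. at `w = s₂/(s₁ + s₂)`.
-/

lemma div_add_mem_Ioo {p q : ℝ} (hp : 0 < p) (hq : 0 < q) : q / (p + q) ∈ Ioo (0 : ℝ) 1 :=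
  ⟨by positivity, (div_lt_one (by positivity)).2 (by linarith)⟩

lemma mul_sub_mul_one_sub_eq_zero_iff {p q w : ℝ} (h : p + q ≠ 0) :
    p * w - q * (1 - w) = 0 ↔ w = q / (p + q) := by
  rw [eq_div_iff h]
  constructor <;> intro <;> linarith

lemma one_div_mul_add_mul_one_div_mul_add_eq {μ₁ μ₂ a s₁ s₂ w : ℝ} (hμ₁ : μ₁ ≠ 0)
    (hμ₂ : μ₂ ≠ 0) (hs₁ : s₁ ^ 2 = a * μ₁ + 1) (hs₂ : s₂ ^ 2 = a * μ₂ + 1) (hw₀ : w ≠ 0)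
    (hw₁ : 1 - w ≠ 0) :
    (1 / (μ₁ * w) + a) * (1 / (μ₂ * (1 - w)) + a) =
      ((s₁ * w - s₂ * (1 - w)) ^ 2 / (w * (1 - w)) + (1 + s₁ * s₂) ^ 2) / (μ₁ * μ₂) := by
  have h₁ : 1 / (μ₁ * w) + a = (s₁ ^ 2 * w + (1 - w)) / (μ₁ * w) := by
    rw [hs₁]; field_simp; ring
  have h₂ : 1 / (μ₂ * (1 - w)) + a = (w + s₂ ^ 2 * (1 - w)) / (μ₂ * (1 - w)) := by
    rw [hs₂]; field_simp; ring
  rw [h₁, h₂]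
  field_simp
  ring

/-- Optimal weight in the unstructured two-point model: the function
`g(w) = (1/(μ₁w) + a)(1/(μ₂(1−w)) + a)` on `(0,1)` attains its unique minimum at
`w* = √(a₂+1)/(√(a₁+1) + √(a₂+1))`, where `aⱼ = a μⱼ`. -/
theorem optimal_weight_two_points (μ₁ μ₂ a : ℝ) (hμ₁ : 0 < μ₁) (hμ₂ : 0 < μ₂) (ha : 0 < a) :
    letI g : ℝ → ℝ := fun w => (1 / (μ₁ * w) + a) * (1 / (μ₂ * (1 - w)) + a)
    letI a₁ : ℝ := a * μ₁
    letI a₂ : ℝ := a * μ₂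
    letI wstar : ℝ := Real.sqrt (a₂ + 1) / (Real.sqrt (a₁ + 1) + Real.sqrt (a₂ + 1))
    wstar ∈ Set.Ioo (0 : ℝ) 1 ∧
    (∀ w ∈ Set.Ioo (0 : ℝ) 1, g wstar ≤ g w) ∧
    (∀ w ∈ Set.Ioo (0 : ℝ) 1, g w = g wstar → w = wstar) := by
  set g : ℝ → ℝ := fun w => (1 / (μ₁ * w) + a) * (1 / (μ₂ * (1 - w)) + a)
  have hs₁ : 0 < √(a * μ₁ + 1) := Real.sqrt_pos.2 (by positivity)
  have hs₂ : 0 < √(a * μ₂ + 1) := Real.sqrt_pos.2 (by positivity)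
  set s₁ := √(a * μ₁ + 1)
  set s₂ := √(a * μ₂ + 1)
  set d : ℝ → ℝ := fun w => (s₁ * w - s₂ * (1 - w)) ^ 2 / (w * (1 - w))
  have hg : ∀ w ∈ Ioo (0 : ℝ) 1, g w = (d w + (1 + s₁ * s₂) ^ 2) / (μ₁ * μ₂) := fun w hw =>
    one_div_mul_add_mul_one_div_mul_add_eq hμ₁.ne' hμ₂.ne' (Real.sq_sqrt (by positivity))
      (Real.sq_sqrt (by positivity)) hw.1.ne' (sub_ne_zero.2 hw.2.ne')
  have hd_eq_zero : ∀ w ∈ Ioo (0 : ℝ) 1, d w = 0 ↔ w = s₂ / (s₁ + s₂) := fun w hw => by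
    have : 0 < w * (1 - w) := mul_pos hw.1 (sub_pos.2 hw.2)
    rw [div_eq_zero_iff, or_iff_left this.ne', pow_eq_zero_iff two_ne_zero,
      mul_sub_mul_one_sub_eq_zero_iff (by positivity)]
  have hwstar : s₂ / (s₁ + s₂) ∈ Ioo (0 : ℝ) 1 := div_add_mem_Ioo hs₁ hs₂
  have hd_wstar : d (s₂ / (s₁ + s₂)) = 0 := (hd_eq_zero _ hwstar).2 rfl
  refine ⟨hwstar, fun w hw => ?_, fun w hw hgw => (hd_eq_zero w hw).1 ?_⟩
  · have : 0 ≤ d w := by have := hw.1; have := sub_pos.2 hw.2; positivity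
    rw [hg w hw, hg _ hwstar, hd_wstar]
    gcongr
  · rw [hg w hw, hg _ hwstar, hd_wstar, div_left_inj' (by positivity)] at hgw
    linarith
end

section
/- In the unstructured two-point setting, the D-efficiency of the uniform design (w₁ = w₂ = 1/2) equals ((√((a₁+1)(a₂+1)) + 1)² − ρ²a₁a₂)^{1/2} / ((a₁+2)(a₂+2) − ρ²a₁a₂)^{1/2}, and this quantity lies in (0, 1] for all a₁, a₂ > 0 and ρ ∈ [0,1], with value 1 iff a₁ = a₂. -/
/-- Efficiency of the uniform design in the unstructured two-point model:
`eff = √(((√((a₁+1)(a₂+1)) + 1)² − ρ²a₁a₂) / ((a₁+2)(a₂+2) − ρ²a₁a₂)) ∈ (0,1]`,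
with value `1` iff `a₁ = a₂`. -/
theorem uniform_design_efficiency (a₁ a₂ ρ : ℝ) (ha₁ : 0 < a₁) (ha₂ : 0 < a₂)
    (hρ0 : 0 ≤ ρ) (hρ1 : ρ ≤ 1) :
    letI eff : ℝ := Real.sqrt
      (((Real.sqrt ((a₁ + 1) * (a₂ + 1)) + 1) ^ 2 - ρ ^ 2 * a₁ * a₂) /
        ((a₁ + 2) * (a₂ + 2) - ρ ^ 2 * a₁ * a₂))
    0 < eff ∧ eff ≤ 1 ∧ (eff = 1 ↔ a₁ = a₂) := by
  set u := Real.sqrt (a₁ + 1) with hu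
  set v := Real.sqrt (a₂ + 1) with hv
  have hu2 : u ^ 2 = a₁ + 1 := Real.sq_sqrt (by linarith)
  have hv2 : v ^ 2 = a₂ + 1 := Real.sq_sqrt (by linarith)
  have hu0 : 0 ≤ u := Real.sqrt_nonneg _
  have hv0 : 0 ≤ v := Real.sqrt_nonneg _
  have hs : Real.sqrt ((a₁ + 1) * (a₂ + 1)) = u * v := by
    rw [hu, hv, ← Real.sqrt_mul (by linarith)]
  have hρ2 : ρ ^ 2 * a₁ * a₂ ≤ a₁ * a₂ := by
    have h1 : (0:ℝ) ≤ (1 - ρ ^ 2) * (a₁ * a₂) :=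
      mul_nonneg (by nlinarith) (by positivity)
    nlinarith
  have hρ2' : 0 ≤ ρ ^ 2 * a₁ * a₂ := by positivity
  set N : ℝ := (Real.sqrt ((a₁ + 1) * (a₂ + 1)) + 1) ^ 2 - ρ ^ 2 * a₁ * a₂ with hNdef
  set D : ℝ := (a₁ + 2) * (a₂ + 2) - ρ ^ 2 * a₁ * a₂ with hDdef
  have hN : 0 < N := by
    rw [hNdef, hs]; nlinarith [sq_nonneg (u*v)]
  have hDN : N ≤ D := by
    rw [hNdef, hDdef, hs]; nlinarith [sq_nonneg (u - v)]
  have hD : 0 < D := lt_of_lt_of_le hN hDN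
  have hdiv_pos : 0 < N / D := div_pos hN hD
  have hdiv_le : N / D ≤ 1 := (div_le_one hD).mpr hDN
  refine ⟨Real.sqrt_pos.mpr hdiv_pos, Real.sqrt_le_one.mpr hdiv_le, ?_⟩
  rw [show Real.sqrt (N / D) = 1 ↔ N / D = 1 from
    ⟨fun h => by nlinarith [Real.sq_sqrt hdiv_pos.le, h], fun h => by rw [h, Real.sqrt_one]⟩,
    div_eq_one_iff_eq hD.ne']
  constructor
  · intro h
    have huv : u = v := by
      have : (u - v) ^ 2 = 0 := by
        rw [hNdef, hDdef, hs] at h; nlinarith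
      have := pow_eq_zero_iff (n := 2) (by norm_num) |>.mp this
      linarith
    have : u ^ 2 = v ^ 2 := by rw [huv]
    linarith
  · intro h
    subst h
    rw [hNdef, hDdef, hs]
    have : u = v := by rw [hu, hv]
    rw [this]; linear_combination (v ^ 2 + a₁ + 3) * hv2
end
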